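/- arXiv:1103.1934 — 2 statements merged into one kernel-verified Lean document; each statement's English description precedes it below -/
import Mathlib

section
/- Every linear, 3-uniform, G(7,4)-sparse hypergraph is 2-cancellative. -/
/-!
If `A ∪ B ∪ C = A ∪ B ∪ D` with `C ≠ D`, every vertex of `C ∪ D` outside `A ∪ B` lies in
`C ∩ D`, so by linearity the four edges span at most `3 + 3 + 1 = 7` vertices.
-/

/-- A 3-uniform hypergraph is `G(7,4)`-sparse: no four distinct edges span at most
7 vertices. -/
def Sparse74 (H : Finset (Finset ℕ)) : Prop :=
  ∀ A B C D : Finset ℕ, A ∈ H → B ∈ H → C ∈ H → D ∈ H →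
    A ≠ B → A ≠ C → A ≠ D → B ≠ C → B ≠ D → C ≠ D →
    7 < (A ∪ B ∪ C ∪ D).card

/-- A hypergraph is linear: two distinct edges meet in at most one vertex. -/
def LinearHypergraph (H : Finset (Finset ℕ)) : Prop :=
  ∀ E F : Finset ℕ, E ∈ H → F ∈ H → E ≠ F → (E ∩ F).card ≤ 1

/-- A family is 2-cancellative: for all four distinct members `A, B, C, D`,
`A ∪ B ∪ C = A ∪ B ∪ D` implies `C = D`. -/
def TwoCancellative (F : Finset (Finset ℕ)) : Prop :=
  ∀ A B C D : Finset ℕ, A ∈ F → B ∈ F → C ∈ F → D ∈ F →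
    A ≠ B → A ≠ C → A ≠ D → B ≠ C → B ≠ D →
    A ∪ B ∪ C = A ∪ B ∪ D → C = D

theorem Finset.union_union_eq_union_inter_of_union_eq {α : Type*} [DecidableEq α]
    {S C D : Finset α} (h : S ∪ C = S ∪ D) : S ∪ C ∪ D = S ∪ (C ∩ D) := by
  have hD : D ⊆ S ∪ C := h ▸ Finset.subset_union_right
  rw [Finset.union_eq_left.mpr hD, Finset.union_inter_distrib_left, ← h, Finset.inter_self]

/-- every linear, 3-uniform, `G(7,4)`-sparse hypergraph is
2-cancellative. -/
theorem linear_sparse_imp_two_cancellative (H : Finset (Finset ℕ))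
    (h3 : ∀ E ∈ H, E.card = 3) (hlin : LinearHypergraph H) (hsp : Sparse74 H) :
    TwoCancellative H := by
  intro A B C D hA hB hC hD hAB hAC hAD hBC hBD hunion
  by_contra hCD
  have hspan := hsp A B C D hA hB hC hD hAB hAC hAD hBC hBD hCD
  rw [Finset.union_union_eq_union_inter_of_union_eq hunion] at hspan
  have hAB_card := Finset.card_union_le A B
  have hcover_card := Finset.card_union_le (A ∪ B) (C ∩ D)
  have hCD_card := hlin C D hC hD hCD
  have hA_card := h3 A hA
  have hB_card := h3 B hB
  omega
end

section
/- Every 3-partite, 2-cancellative, linear 3-uniform hypergraph is G(7,4)-sparse: no four distinct edges span at most 7 vertices. -/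
/-!
Let `F` be four distinct edges whose union `U` has at most seven vertices. No vertex `v` lies in
three edges of `F`: by linearity these edges have distinct vertices in each of the two parts
avoiding `v`, so those parts carry at least three vertices of `U` each and the third part at most
one; then all four edges pass through one vertex `p` of the third part, and the parts avoiding `p`
carry four vertices each, too many. So all degrees are at most two, and as they add up to twelve,
at most two vertices of `U` have degree one. An edge not covered by the other three contains such
a vertex, so two edges `X ≠ Y` are covered by the others; writing `F = {X, Y, Z, W}` this gives
`Z ∪ W ∪ X = Z ∪ W ∪ Y`, against 2-cancellativity.
-/

open Finset

def IsTripartition (H : Finset (Finset ℕ)) (P Q R : Finset ℕ) : Prop :=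
  Disjoint P Q ∧ Disjoint P R ∧ Disjoint Q R ∧
    ∀ E ∈ H, #(E ∩ P) = 1 ∧ #(E ∩ Q) = 1 ∧ #(E ∩ R) = 1

variable {H F : Finset (Finset ℕ)} {P Q R E E' X Y : Finset ℕ} {v x y : ℕ}

theorem LinearHypergraph.eq_of_mem_of_mem (hlin : LinearHypergraph H) (hE : E ∈ H)
    (hE' : E' ∈ H) (hxy : x ≠ y) (hxE : x ∈ E) (hyE : y ∈ E) (hxE' : x ∈ E')
    (hyE' : y ∈ E') : E = E' := by
  by_contra hne
  have hle := hlin E E' hE hE' hne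
  have hlt : 1 < #(E ∩ E') :=
    one_lt_card.2 ⟨x, mem_inter.2 ⟨hxE, hxE'⟩, y, mem_inter.2 ⟨hyE, hyE'⟩, hxy⟩
  omega

theorem LinearHypergraph.card_filter_mem_le_card_sup_inter (hlin : LinearHypergraph H)
    (hF : F ⊆ H) (hQ : ∀ E ∈ H, (E ∩ Q).Nonempty) (hv : v ∉ Q) :
    #{E ∈ F | v ∈ E} ≤ #(F.sup id ∩ Q) := by
  refine card_le_card_of_forall_subsingleton (fun E x => x ∈ E) ?_ ?_
  · intro E hE
    have hEF := (mem_filter.1 hE).1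
    obtain ⟨x, hx⟩ := hQ E (hF hEF)
    obtain ⟨hxE, hxQ⟩ := mem_inter.1 hx
    exact ⟨x, mem_inter.2 ⟨mem_sup.2 ⟨E, hEF, hxE⟩, hxQ⟩, hxE⟩
  · intro x hx E₁ ⟨hE₁, hxE₁⟩ E₂ ⟨hE₂, hxE₂⟩
    rw [mem_filter] at hE₁ hE₂
    have hxv : x ≠ v := ne_of_mem_of_not_mem (mem_inter.1 hx).2 hv
    exact hlin.eq_of_mem_of_mem (hF hE₁.1) (hF hE₂.1) hxv hxE₁ hE₁.2 hxE₂ hE₂.2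

theorem card_inter_add_card_inter_add_card_inter_le (U : Finset ℕ) (hPQ : Disjoint P Q)
    (hPR : Disjoint P R) (hQR : Disjoint Q R) : #(U ∩ P) + #(U ∩ Q) + #(U ∩ R) ≤ #U := by
  have hdisj {S T : Finset ℕ} (h : Disjoint S T) : Disjoint (U ∩ S) (U ∩ T) :=
    h.mono inter_subset_right inter_subset_right
  rw [← card_union_of_disjoint (hdisj hPQ),
    ← card_union_of_disjoint (disjoint_union_left.2 ⟨hdisj hPR, hdisj hQR⟩)]
  exact card_le_card <|
    union_subset (union_subset inter_subset_left inter_subset_left) inter_subset_left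

theorem exists_forall_mem_of_card_sup_inter_le_one (hF : F.Nonempty)
    (hP : ∀ E ∈ F, (E ∩ P).Nonempty) (h : #(F.sup id ∩ P) ≤ 1) :
    ∃ p ∈ F.sup id ∩ P, ∀ E ∈ F, p ∈ E := by
  have hmem {E p} (hE : E ∈ F) (hp : p ∈ E ∩ P) : p ∈ F.sup id ∩ P :=
    mem_inter.2 ⟨mem_sup.2 ⟨E, hE, (mem_inter.1 hp).1⟩, (mem_inter.1 hp).2⟩
  obtain ⟨E₀, hE₀⟩ := hF
  obtain ⟨p, hp⟩ := hP E₀ hE₀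
  refine ⟨p, hmem hE₀ hp, fun E hE => ?_⟩
  obtain ⟨q, hq⟩ := hP E hE
  rw [card_le_one.1 h p (hmem hE₀ hp) q (hmem hE hq)]
  exact (mem_inter.1 hq).1

theorem IsTripartition.rotate (h : IsTripartition H P Q R) : IsTripartition H Q R P :=
  ⟨h.2.2.1, h.1.symm, h.2.1.symm, fun E hE =>
    ⟨(h.2.2.2 E hE).2.1, (h.2.2.2 E hE).2.2, (h.2.2.2 E hE).1⟩⟩

theorem IsTripartition.card_filter_mem_le_two_of_notMem (htri : IsTripartition H P Q R)
    (hlin : LinearHypergraph H) (hF : F ⊆ H) (hcard : #F = 4) (hU : #(F.sup id) ≤ 7)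
    (hvQ : v ∉ Q) (hvR : v ∉ R) : #{E ∈ F | v ∈ E} ≤ 2 := by
  obtain ⟨hPQ, hPR, hQR, hmeet⟩ := htri
  have hP : ∀ E ∈ H, (E ∩ P).Nonempty := fun E hE => card_pos.1 (by simp [(hmeet E hE).1])
  have hQ : ∀ E ∈ H, (E ∩ Q).Nonempty := fun E hE => card_pos.1 (by simp [(hmeet E hE).2.1])
  have hR : ∀ E ∈ H, (E ∩ R).Nonempty := fun E hE => card_pos.1 (by simp [(hmeet E hE).2.2])
  have hparts := card_inter_add_card_inter_add_card_inter_le (F.sup id) hPQ hPR hQR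
  by_contra! hv
  have hvQ' := hlin.card_filter_mem_le_card_sup_inter hF hQ hvQ
  have hvR' := hlin.card_filter_mem_le_card_sup_inter hF hR hvR
  -- the three edges through `v` leave room for a single vertex of `P`
  obtain ⟨p, hpUP, hp⟩ := exists_forall_mem_of_card_sup_inter_le_one
    (card_pos.1 (by omega)) (fun E hE => hP E (hF hE)) (by omega)
  have hpU : 0 < #(F.sup id ∩ P) := card_pos.2 ⟨p, hpUP⟩
  have hpQ := hlin.card_filter_mem_le_card_sup_inter hF hQ
    (disjoint_left.1 hPQ (mem_inter.1 hpUP).2)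
  rw [filter_true_of_mem hp] at hpQ
  omega

theorem IsTripartition.card_filter_mem_le_two (htri : IsTripartition H P Q R)
    (hlin : LinearHypergraph H) (hF : F ⊆ H) (hcard : #F = 4) (hU : #(F.sup id) ≤ 7)
    (v : ℕ) : #{E ∈ F | v ∈ E} ≤ 2 := by
  by_cases hvP : v ∈ P
  · exact htri.card_filter_mem_le_two_of_notMem hlin hF hcard hU
      (disjoint_left.1 htri.1 hvP) (disjoint_left.1 htri.2.1 hvP)
  by_cases hvQ : v ∈ Q
  · exact htri.rotate.card_filter_mem_le_two_of_notMem hlin hF hcard hU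
      (disjoint_left.1 htri.2.2.1 hvQ) hvP
  · exact htri.rotate.rotate.card_filter_mem_le_two_of_notMem hlin hF hcard hU hvP hvQ

theorem sum_card_add_card_filter_le (hdeg : ∀ v, #{E ∈ F | v ∈ E} ≤ 2) :
    ∑ E ∈ F, #E + #{v ∈ F.sup id | #{E ∈ F | v ∈ E} ≤ 1} ≤ 2 * #(F.sup id) := by
  set U := F.sup id
  set L := {v ∈ U | #{E ∈ F | v ∈ E} ≤ 1}
  have hL : ∑ E ∈ F, #(L ∩ E) ≤ #L * 1 := sum_card_inter_le fun v hv => (mem_filter.1 hv).2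
  have hUL : ∑ E ∈ F, #((U \ L) ∩ E) ≤ #(U \ L) * 2 := sum_card_inter_le fun v _ => hdeg v
  have hsplit : ∑ E ∈ F, #E = ∑ E ∈ F, #(L ∩ E) + ∑ E ∈ F, #((U \ L) ∩ E) := by
    rw [← sum_add_distrib]
    refine sum_congr rfl fun E hE => ?_
    have hEU : E ⊆ U := le_sup (f := id) hE
    rw [← card_union_of_disjoint (disjoint_sdiff.mono inter_subset_left inter_subset_left),
      ← union_inter_distrib_right, union_sdiff_of_subset (filter_subset _ U),
      inter_eq_right.2 hEU]
  have hcard : #(U \ L) = #U - #L := card_sdiff_of_subset (filter_subset _ U)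
  have hLU : #L ≤ #U := card_le_card (filter_subset _ U)
  omega

theorem card_filter_not_subset_sup_erase_le :
    #{E ∈ F | ¬E ⊆ (F.erase E).sup id} ≤ #{v ∈ F.sup id | #{E ∈ F | v ∈ E} ≤ 1} := by
  refine card_le_card_of_forall_subsingleton (fun E v => v ∈ E) (fun E hE => ?_) ?_
  · obtain ⟨hEF, hns⟩ := mem_filter.1 hE
    obtain ⟨v, hvE, hv⟩ := not_subset.1 hns
    have honly : {E' ∈ F | v ∈ E'} ⊆ {E} := fun E' hE' => by
      rw [mem_filter] at hE'
      by_contra hne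
      exact hv (mem_sup.2 ⟨E', mem_erase.2 ⟨mt mem_singleton.2 hne, hE'.1⟩, hE'.2⟩)
    have hdeg : #{E' ∈ F | v ∈ E'} ≤ 1 := (card_le_card honly).trans (card_singleton E).le
    exact ⟨v, mem_filter.2 ⟨mem_sup.2 ⟨E, hEF, hvE⟩, hdeg⟩, hvE⟩
  · intro v hv E₁ ⟨hE₁, hvE₁⟩ E₂ ⟨hE₂, hvE₂⟩
    rw [mem_filter] at hv hE₁ hE₂
    exact card_le_one.1 hv.2 E₁ (mem_filter.2 ⟨hE₁.1, hvE₁⟩) E₂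
      (mem_filter.2 ⟨hE₂.1, hvE₂⟩)

theorem TwoCancellative.not_subset_sup_erase (hcanc : TwoCancellative H) (hF : F ⊆ H)
    (hcard : #F = 4) (hX : X ∈ F) (hY : Y ∈ F) (hXY : X ≠ Y)
    (hXs : X ⊆ (F.erase X).sup id) : ¬Y ⊆ (F.erase Y).sup id := by
  intro hYs
  have hYX : Y ∈ F.erase X := mem_erase.2 ⟨hXY.symm, hY⟩
  obtain ⟨Z, W, hZW, hrest⟩ : ∃ Z W, Z ≠ W ∧ (F.erase X).erase Y = {Z, W} := by
    rw [← card_eq_two, card_erase_of_mem hYX, card_erase_of_mem hX, hcard]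
  have hZ : Z ∈ (F.erase X).erase Y := by simp [hrest]
  have hW : W ∈ (F.erase X).erase Y := by simp [hrest]
  simp only [mem_erase] at hZ hW
  rw [← insert_erase hYX, hrest] at hXs
  rw [← insert_erase (mem_erase.2 ⟨hXY, hX⟩), erase_right_comm, hrest] at hYs
  simp only [sup_insert, sup_singleton, id, sup_eq_union] at hXs hYs
  refine hXY (hcanc Z W X Y (hF hZ.2.2) (hF hW.2.2) (hF hX) (hF hY) hZW hZ.2.1 hZ.1
    hW.2.1 hW.1 ?_)
  rw [union_comm (Z ∪ W), union_comm (Z ∪ W)]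
  exact Subset.antisymm (union_subset hXs subset_union_right)
    (union_subset hYs subset_union_right)

theorem seven_lt_card_sup (h3 : ∀ E ∈ H, #E = 3) (htri : IsTripartition H P Q R)
    (hcanc : TwoCancellative H) (hlin : LinearHypergraph H) (hF : F ⊆ H) (hcard : #F = 4) :
    7 < #(F.sup id) := by
  by_contra! hU
  have hdeg := htri.card_filter_mem_le_two hlin hF hcard hU
  have hsum : ∑ E ∈ F, #E = 12 := by
    rw [sum_congr rfl fun E hE => h3 E (hF hE), sum_const, hcard, smul_eq_mul]
  have hlow := sum_card_add_card_filter_le hdeg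
  have hdeficient := card_filter_not_subset_sup_erase_le (F := F)
  have hsplit := card_filter_add_card_filter_not (s := F) (fun E => E ⊆ (F.erase E).sup id)
  obtain ⟨X, hX, Y, hY, hXY⟩ :=
    one_lt_card.1 (show 1 < #{E ∈ F | E ⊆ (F.erase E).sup id} by omega)
  rw [mem_filter] at hX hY
  exact hcanc.not_subset_sup_erase hF hcard hX.1 hY.1 hXY hX.2 hY.2

/-- every 3-partite, 2-cancellative, linear 3-uniform hypergraph is
`G(7,4)`-sparse. -/
theorem tripartite_cancellative_linear_imp_sparse (H : Finset (Finset ℕ))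
    (h3 : ∀ E ∈ H, E.card = 3)
    (htri : ∃ V1 V2 V3 : Finset ℕ, Disjoint V1 V2 ∧ Disjoint V1 V3 ∧ Disjoint V2 V3 ∧
      ∀ E ∈ H, (E ∩ V1).card = 1 ∧ (E ∩ V2).card = 1 ∧ (E ∩ V3).card = 1)
    (hcanc : TwoCancellative H) (hlin : LinearHypergraph H) :
    Sparse74 H := by
  obtain ⟨P, Q, R, htri⟩ := htri
  intro A B C D hA hB hC hD hAB hAC hAD hBC hBD hCD
  have hF : {A, B, C, D} ⊆ H := by simp [insert_subset_iff, *]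
  have hcard : #{A, B, C, D} = 4 := by simp [*]
  simpa [sup_insert, union_assoc] using seven_lt_card_sup h3 htri hcanc hlin hF hcard
end
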